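/- arXiv:2110.09089 — 7 statements merged into one kernel-verified Lean document; each statement's English description precedes it below -/
import Mathlib

section
/- Let a, b ∈ {1, 3} ⊆ ℤ/4ℤ and R = R_{a+bw}. Then the principal ideals (2), (2w) and (2+2w) of R coincide, and R has exactly three ideals, namely (0) ⊊ (2) ⊊ R. -/
open Polynomial

/-- The base ring ℤ/4ℤ. -/
abbrev Z4 := ZMod 4

/-- The polynomial X² − (a + bX) over ℤ/4ℤ. -/
noncomputable def wPoly (a b : Z4) : Z4[X] := X ^ 2 - (C b * X + C a)

/-- The ring R_{a+bw} = (ℤ/4ℤ)[X]/(X² − (a + bX)); every element is uniquely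
x₀ + x₁·w with x₀, x₁ ∈ ℤ/4ℤ, and w² = a + b·w. -/
abbrev Rw (a b : Z4) : Type := AdjoinRoot (wPoly a b)

/-- The element w of R_{a+bw}. -/
noncomputable def ww (a b : Z4) : Rw a b := AdjoinRoot.root _

/-! The element 2 of `R = R_{a+bw}` squares to zero, and for odd `a` and `b` every element of
`R` outside `(2)` is a unit: writing `x = c₀ + c₁w`, the product of `x` with its conjugate
`(c₀ + bc₁) - c₁w` is the norm `c₀² + bc₀c₁ - ac₁²`, which is odd unless `c₀` and `c₁` are both
even. A ring in which an element `m` with `m² = 0` divides every non-unit has only the ideals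
`0`, `(m)` and the whole ring: a nonzero `mt` in an ideal forces `t` to be a unit. The principal
ideals `(2w)` and `(2 + 2w)` equal `(2)` because `w` and `1 + w` have odd norm. -/

theorem Ideal.eq_bot_or_eq_span_or_eq_top_of_isUnit_or_dvd {R : Type*} [CommRing R] {m : R}
    (hm : m * m = 0) (h : ∀ x : R, IsUnit x ∨ m ∣ x) (I : Ideal R) :
    I = ⊥ ∨ I = Ideal.span {m} ∨ I = ⊤ := by
  by_cases hunit : ∃ x ∈ I, IsUnit x
  · obtain ⟨x, hx, hu⟩ := hunit
    exact Or.inr (Or.inr (I.eq_top_of_isUnit_mem hx hu))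
  push Not at hunit
  have hle : I ≤ Ideal.span {m} := fun x hx =>
    Ideal.mem_span_singleton.2 ((h x).resolve_left (hunit x hx))
  by_cases hbot : I = ⊥
  · exact Or.inl hbot
  obtain ⟨y, hy, hy0⟩ := Submodule.exists_mem_ne_zero_of_ne_bot hbot
  obtain ⟨t, rfl⟩ := Ideal.mem_span_singleton.1 (hle hy)
  have ht : IsUnit t := (h t).resolve_right <| by
    rintro ⟨s, rfl⟩
    exact hy0 (by rw [← mul_assoc, hm, zero_mul])
  refine Or.inr (Or.inl (le_antisymm hle ?_))
  rw [Ideal.span_singleton_le_iff_mem]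
  exact (I.mul_unit_mem_iff_mem ht).1 hy

section Rw

variable {a b : Z4}

instance : Fact (1 < 4) := ⟨by norm_num⟩

theorem wPoly_monic (a b : Z4) : (wPoly a b).Monic := by
  rw [wPoly]
  exact monic_X_pow_sub (degree_linear_le.trans_lt (by norm_num))

theorem degree_wPoly (a b : Z4) : (wPoly a b).degree = 2 := by
  rw [wPoly, degree_sub_eq_left_of_degree_lt, degree_X_pow]
  · rfl
  · rw [degree_X_pow]
    exact lt_of_le_of_lt degree_linear_le (by norm_num)

theorem ww_sq (a b : Z4) :
    ww a b ^ 2 = algebraMap Z4 (Rw a b) a + algebraMap Z4 (Rw a b) b * ww a b := by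
  have h : AdjoinRoot.mk (wPoly a b) (X ^ 2 - (C b * X + C a)) = 0 := AdjoinRoot.mk_self
  rw [map_sub, sub_eq_zero] at h
  simpa [ww, AdjoinRoot.mk_C, AdjoinRoot.mk_X, AdjoinRoot.algebraMap_eq, add_comm] using h

theorem Rw.exists_eq_add_mul_ww (x : Rw a b) :
    ∃ c₀ c₁ : Z4, x = algebraMap Z4 (Rw a b) c₀ + algebraMap Z4 (Rw a b) c₁ * ww a b := by
  obtain ⟨p, rfl⟩ := AdjoinRoot.mk_surjective x
  have hr : (p %ₘ wPoly a b).natDegree ≤ 1 := by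
    have := natDegree_modByMonic_lt p (wPoly_monic a b) fun h => by
      simpa [h] using degree_wPoly a b
    have h2 : (wPoly a b).natDegree = 2 := natDegree_eq_of_degree_eq_some (degree_wPoly a b)
    omega
  refine ⟨(p %ₘ wPoly a b).coeff 0, (p %ₘ wPoly a b).coeff 1, ?_⟩
  rw [← AdjoinRoot.mk_leftInverse (wPoly_monic a b) (AdjoinRoot.mk _ p),
    AdjoinRoot.modByMonicHom_mk]
  conv_lhs => rw [eq_X_add_C_of_natDegree_le_one hr]
  simp [ww, AdjoinRoot.mk_C, AdjoinRoot.algebraMap_eq, add_comm]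

theorem Rw.two_ne_zero (a b : Z4) : (2 : Rw a b) ≠ 0 := by
  have h := AdjoinRoot.mk_ne_zero_of_degree_lt (wPoly_monic a b) (g := C 2)
    (by rw [Ne, C_eq_zero]; decide) (by rw [degree_wPoly, degree_C (by decide)]; norm_num)
  simpa [AdjoinRoot.mk_C, map_ofNat] using h

theorem Rw.two_mul_two_eq_zero (a b : Z4) : (2 : Rw a b) * 2 = 0 := by
  have h : algebraMap Z4 (Rw a b) (2 * 2) = 0 := by rw [show (2 * 2 : Z4) = 0 by decide, map_zero]
  rwa [map_mul, map_ofNat] at h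

def wNorm (a b c₀ c₁ : Z4) : Z4 := c₀ ^ 2 + b * c₀ * c₁ - a * c₁ ^ 2

theorem Rw.mul_conj (c₀ c₁ : Z4) :
    (algebraMap Z4 (Rw a b) c₀ + algebraMap Z4 (Rw a b) c₁ * ww a b) *
      (algebraMap Z4 (Rw a b) (c₀ + b * c₁) - algebraMap Z4 (Rw a b) c₁ * ww a b) =
    algebraMap Z4 (Rw a b) (wNorm a b c₀ c₁) := by
  simp only [wNorm, map_add, map_mul, map_sub, map_pow]
  linear_combination (-(algebraMap Z4 (Rw a b) c₁) ^ 2) * ww_sq a b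

theorem Rw.isUnit_of_isUnit_wNorm {c₀ c₁ : Z4} (h : IsUnit (wNorm a b c₀ c₁)) :
    IsUnit (algebraMap Z4 (Rw a b) c₀ + algebraMap Z4 (Rw a b) c₁ * ww a b) :=
  isUnit_of_mul_isUnit_left (Rw.mul_conj (a := a) (b := b) c₀ c₁ ▸ h.map _)

theorem isUnit_wNorm_or_even (ha : a = 1 ∨ a = 3) (hb : b = 1 ∨ b = 3) (c₀ c₁ : Z4) :
    IsUnit (wNorm a b c₀ c₁) ∨ ∃ d₀ d₁ : Z4, c₀ = 2 * d₀ ∧ c₁ = 2 * d₁ := by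
  rcases ha with rfl | rfl <;> rcases hb with rfl | rfl <;> revert c₀ c₁ <;> decide

theorem Rw.isUnit_or_two_dvd (ha : a = 1 ∨ a = 3) (hb : b = 1 ∨ b = 3) (x : Rw a b) :
    IsUnit x ∨ 2 ∣ x := by
  obtain ⟨c₀, c₁, rfl⟩ := Rw.exists_eq_add_mul_ww x
  refine (isUnit_wNorm_or_even ha hb c₀ c₁).imp Rw.isUnit_of_isUnit_wNorm ?_
  rintro ⟨d₀, d₁, rfl, rfl⟩
  refine ⟨algebraMap Z4 (Rw a b) d₀ + algebraMap Z4 (Rw a b) d₁ * ww a b, ?_⟩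
  simp only [map_mul, map_ofNat]
  ring

theorem isUnit_ww (ha : a = 1 ∨ a = 3) : IsUnit (ww a b) := by
  simpa using Rw.isUnit_of_isUnit_wNorm (a := a) (b := b) (c₀ := 0) (c₁ := 1)
    (by rw [show wNorm a b 0 1 = -a by unfold wNorm; ring]; rcases ha with rfl | rfl <;> decide)

theorem isUnit_one_add_ww (ha : a = 1 ∨ a = 3) (hb : b = 1 ∨ b = 3) :
    IsUnit (1 + ww a b) := by
  simpa using Rw.isUnit_of_isUnit_wNorm (a := a) (b := b) (c₀ := 1) (c₁ := 1)
    (by rcases ha with rfl | rfl <;> rcases hb with rfl | rfl <;> decide)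

end Rw

/-- for a, b ∈ {1,3} ⊆ ℤ/4ℤ, the ideals (2), (2w) and (2+2w) of R_{a+bw}
coincide, and R_{a+bw} has exactly three ideals, namely (0) ⊊ (2) ⊊ R_{a+bw}. -/
theorem ideals_of_Rw_units_case (a b : Z4) (ha : a = 1 ∨ a = 3) (hb : b = 1 ∨ b = 3) :
    Ideal.span {(2 : Rw a b)} = Ideal.span {2 * ww a b} ∧
    Ideal.span {(2 : Rw a b)} = Ideal.span {2 + 2 * ww a b} ∧
    (∀ I : Ideal (Rw a b), I = ⊥ ∨ I = Ideal.span {(2 : Rw a b)} ∨ I = ⊤) ∧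
    (⊥ : Ideal (Rw a b)) < Ideal.span {(2 : Rw a b)} ∧
    Ideal.span {(2 : Rw a b)} < (⊤ : Ideal (Rw a b)) := by
  refine ⟨?_, ?_, Ideal.eq_bot_or_eq_span_or_eq_top_of_isUnit_or_dvd (Rw.two_mul_two_eq_zero a b)
    (Rw.isUnit_or_two_dvd ha hb), ?_, ?_⟩
  · exact (Ideal.span_singleton_mul_right_unit (isUnit_ww ha) 2).symm
  · rw [show (2 : Rw a b) + 2 * ww a b = 2 * (1 + ww a b) by ring]
    exact (Ideal.span_singleton_mul_right_unit (isUnit_one_add_ww ha hb) 2).symm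
  · exact bot_lt_iff_ne_bot.2 (mt Ideal.span_singleton_eq_bot.1 (Rw.two_ne_zero a b))
  · refine lt_top_iff_ne_top.2 fun h => Rw.two_ne_zero a b ?_
    exact (Ideal.span_singleton_eq_top.1 h).mul_right_eq_zero.1 (Rw.two_mul_two_eq_zero a b)
end

section
/- For (a,b) ∈ (ℤ/4ℤ)², the ideals of R_{a+bw} are totally ordered by inclusion (i.e., R_{a+bw} is a chain ring) if and only if a + bw ∈ {2, 3, 1+w, 3+w, 1+2w, 2+2w, 1+3w, 3+3w}, i.e., if and only if (a,b) ∈ {(2,0), (3,0), (1,1), (3,1), (1,2), (2,2), (1,3), (3,3)}; for the remaining eight values θ ∈ {0, 1, w, 2w, 3w, 2+w, 3+2w, 2+3w} there exist two ideals of R_θ neither of which contains the other. -/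
/-!
`R_{a+bw}` is the quadratic algebra `(ℤ/4ℤ)[ω]`, `ω² = a + bω`, of pairs `x₀ + x₁ω`. Every ideal
is the union of the principal ideals it contains, so the ideals are totally ordered exactly when
divisibility is a total relation on elements; for the sixteen rings of sixteen elements each this
is a finite computation.

Behind the list: `R_{a+bw}` is a chain ring iff it is local with principal maximal ideal. For
`a, b` odd, `X² + X + 1` is irreducible mod 2 and `R_{a+bw}` is the Galois ring of order 16; for
`b` odd and `a` even, `X² - bX - a ≡ X(X + 1)` mod 2 and the ring is not local; otherwise
`X² - bX - a ≡ (X - c)²` mod 2, and the maximal ideal `(2, w - c)` is principal iff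
`X² - bX - a` is Eisenstein after `X ↦ X + c`, i.e. iff `c² - bc - a ≡ 2` mod 4.
-/

open Polynomial

theorem MulEquiv.preValuationRing_iff {A B : Type*} [Mul A] [Mul B] (e : A ≃* B) :
    PreValuationRing A ↔ PreValuationRing B :=
  ⟨fun _ => e.surjective.preValuationRing e.toMulHom,
    fun _ => e.symm.surjective.preValuationRing e.symm.toMulHom⟩

open scoped QuadraticAlgebra

section

variable {R : Type*} [CommRing R] (a b : R)

theorem QuadraticAlgebra.eval₂_omega :
    (X ^ 2 - (C b * X + C a)).eval₂
      (Algebra.ofId R (QuadraticAlgebra R a b) : R →+* QuadraticAlgebra R a b) ω = 0 := by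
  ext <;> simp [sq]

theorem AdjoinRoot.root_mul_root_of_quadratic :
    root (X ^ 2 - (C b * X + C a)) * root (X ^ 2 - (C b * X + C a)) =
      a • 1 + b • root (X ^ 2 - (C b * X + C a)) := by
  have h := AdjoinRoot.mk_self (f := X ^ 2 - (C b * X + C a))
  rw [map_sub, map_add, map_mul, map_pow, mk_X, mk_C, mk_C] at h
  rw [Algebra.smul_def, Algebra.smul_def, mul_one, AdjoinRoot.algebraMap_eq]
  linear_combination h

noncomputable def AdjoinRoot.quadraticAlgebraEquiv :
    AdjoinRoot (X ^ 2 - (C b * X + C a)) ≃ₐ[R] QuadraticAlgebra R a b :=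
  AlgEquiv.ofAlgHom
    (AdjoinRoot.liftAlgHom _ (Algebra.ofId R _) ω (QuadraticAlgebra.eval₂_omega a b))
    (QuadraticAlgebra.lift ⟨_, AdjoinRoot.root_mul_root_of_quadratic a b⟩)
    (by ext <;> simp)
    (by apply AdjoinRoot.algHom_ext; simp)

end

instance QuadraticAlgebra.instFintype {R : Type*} [Fintype R] (a b : R) :
    Fintype (QuadraticAlgebra R a b) :=
  Fintype.ofEquiv _ (QuadraticAlgebra.equivProd a b).symm

theorem QuadraticAlgebra.preValuationRing_zmod_four_iff (a b : ZMod 4) :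
    PreValuationRing (QuadraticAlgebra (ZMod 4) a b) ↔
      ((a, b) = (2, 0) ∨ (a, b) = (3, 0) ∨ (a, b) = (1, 1) ∨ (a, b) = (3, 1) ∨
       (a, b) = (1, 2) ∨ (a, b) = (2, 2) ∨ (a, b) = (1, 3) ∨ (a, b) = (3, 3)) := by
  have dvd_total_iff : ∀ a b : ZMod 4,
      (∀ x y : QuadraticAlgebra (ZMod 4) a b, ∃ c, x * c = y ∨ y * c = x) ↔
        ((a, b) = (2, 0) ∨ (a, b) = (3, 0) ∨ (a, b) = (1, 1) ∨ (a, b) = (3, 1) ∨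
         (a, b) = (1, 2) ∨ (a, b) = (2, 2) ∨ (a, b) = (1, 3) ∨ (a, b) = (3, 3)) := by
    decide
  exact ⟨fun h => (dvd_total_iff a b).1 h.cond', fun h => ⟨(dvd_total_iff a b).2 h⟩⟩

/-- R_{a+bw} is a chain ring (its ideals are totally ordered by inclusion)
iff a + bw ∈ {2, 3, 1+w, 3+w, 1+2w, 2+2w, 1+3w, 3+3w}; for the remaining eight values
of a + bw there exist two incomparable ideals. -/
theorem Rw_chain_ring_classification (a b : Z4) :
    ((∀ I J : Ideal (Rw a b), I ≤ J ∨ J ≤ I) ↔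
      ((a, b) = (2, 0) ∨ (a, b) = (3, 0) ∨ (a, b) = (1, 1) ∨ (a, b) = (3, 1) ∨
       (a, b) = (1, 2) ∨ (a, b) = (2, 2) ∨ (a, b) = (1, 3) ∨ (a, b) = (3, 3))) ∧
    (¬((a, b) = (2, 0) ∨ (a, b) = (3, 0) ∨ (a, b) = (1, 1) ∨ (a, b) = (3, 1) ∨
       (a, b) = (1, 2) ∨ (a, b) = (2, 2) ∨ (a, b) = (1, 3) ∨ (a, b) = (3, 3)) →
      ∃ I J : Ideal (Rw a b), ¬I ≤ J ∧ ¬J ≤ I) := by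
  have e : Rw a b ≃ₐ[Z4] QuadraticAlgebra Z4 a b := AdjoinRoot.quadraticAlgebraEquiv a b
  have chain_iff : (∀ I J : Ideal (Rw a b), I ≤ J ∨ J ≤ I) ↔
      ((a, b) = (2, 0) ∨ (a, b) = (3, 0) ∨ (a, b) = (1, 1) ∨ (a, b) = (3, 1) ∨
       (a, b) = (1, 2) ∨ (a, b) = (2, 2) ∨ (a, b) = (1, 3) ∨ (a, b) = (3, 3)) := by
    rw [← QuadraticAlgebra.preValuationRing_zmod_four_iff, ← e.toMulEquiv.preValuationRing_iff,
      PreValuationRing.iff_ideal_total]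
    exact ⟨fun h => ⟨h⟩, fun h => h.total⟩
  refine ⟨chain_iff, fun h => ?_⟩
  simpa only [not_forall, not_or] using mt chain_iff.1 h
end

section
/- For every a, b ∈ ℤ/4ℤ, the Gau map φ is a bijection from R_{a+bw} onto Σ = Fin 4 × Fin 4, and for every x ∈ R_{a+bw} it satisfies φ(3x) = (φ(x).2, φ(x).1) (reversal of the DNA pair) and φ(x + (2+2w)) = (3 − φ(x).1, 3 − φ(x).2) (Watson–Crick complement of the DNA pair). -/
open Polynomial

instance (a b : Z4) : Nonempty (Rw a b) := ⟨0⟩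

/-- The Gau map expressed on coordinates:  ψ(x₀, x₁) is the DNA pair (in Fin 4 × Fin 4,
with A,G,C,T encoded as 0,1,2,3) assigned to the ring element x₀ + x₁·w. -/
def psi (p : Z4 × Z4) : Fin 4 × Fin 4 :=
  match p.1.val, p.2.val with
  | 0, 0 => (3, 3)
  | 1, 0 => (0, 1)
  | 2, 0 => (2, 2)
  | 3, 0 => (1, 0)
  | 0, 1 => (0, 2)
  | 1, 1 => (0, 3)
  | 2, 1 => (1, 3)
  | 3, 1 => (1, 2)
  | 0, 2 => (1, 1)
  | 1, 2 => (2, 3)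
  | 2, 2 => (0, 0)
  | 3, 2 => (3, 2)
  | 0, 3 => (2, 0)
  | 1, 3 => (2, 1)
  | 2, 3 => (3, 1)
  | _, _ => (3, 0)

/-- `phi` is a Gau map on R_{a+bw}: on the element x₀ + x₁·w it takes the value
prescribed by the table ψ. -/
def IsGauMap (a b : Z4) (phi : Rw a b → Fin 4 × Fin 4) : Prop :=
  ∀ x₀ x₁ : Z4,
    phi (algebraMap Z4 (Rw a b) x₀ + algebraMap Z4 (Rw a b) x₁ * ww a b) = psi (x₀, x₁)

/-- Coordinatewise extension Φ of a Gau map φ to vectors. -/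
def PhiV (a b : Z4) (phi : Rw a b → Fin 4 × Fin 4) (n : ℕ) (x : Fin n → Rw a b) :
    Fin n → Fin 4 × Fin 4 :=
  fun j => phi (x j)

/-- Inverse Φ⁻¹ of the coordinatewise extension of a Gau map. -/
noncomputable def PhiVinv (a b : Z4) (phi : Rw a b → Fin 4 × Fin 4) (n : ℕ)
    (y : Fin n → Fin 4 × Fin 4) : Fin n → Rw a b :=
  fun j => Function.invFun phi (y j)

/-- DNA-string reversal y ↦ y^R on Σⁿ: read the length-2n DNA string backwards,
i.e. reverse the order of the pairs and swap the two entries of each pair. -/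
def dnaRev (n : ℕ) (y : Fin n → Fin 4 × Fin 4) : Fin n → Fin 4 × Fin 4 :=
  fun j => ((y j.rev).2, (y j.rev).1)

/-- Watson–Crick complement y ↦ y^C on Σⁿ. -/
def dnaCompl (n : ℕ) (y : Fin n → Fin 4 × Fin 4) : Fin n → Fin 4 × Fin 4 :=
  fun j => (3 - (y j).1, 3 - (y j).2)

/-- Vector reversal g ↦ g^r on Rⁿ. -/
def vecRev {α : Type*} (n : ℕ) (x : Fin n → α) : Fin n → α :=
  fun j => x j.rev

/-!
The elements of `R_{a+bw}` are exactly the `x₀ + x₁ w`, each written uniquely, since `1, w` is a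
basis of `(ℤ/4ℤ)[X]/(X² − (a + bX))` over `ℤ/4ℤ` (the modulus is monic of degree `2`). Hence a Gau
map is the table `ψ` read through these coordinates, and the three claims are statements about `ψ`
alone: `ψ` is a bijection, multiplication by `3` acts coordinatewise, and adding `2 + 2w` adds `2`
to both coordinates.
-/

theorem PowerBasis.bijective_algebraMap_add_algebraMap_mul_gen {R S : Type*} [CommRing R]
    [Ring S] [Algebra R S] (pb : PowerBasis R S) (h : pb.dim = 2) :
    Function.Bijective fun q : R × R => algebraMap R S q.1 + algebraMap R S q.2 * pb.gen := by
  convert ((pb.basis.reindex (finCongr h)).equivFun.symm.bijective.comp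
    (finTwoArrowEquiv R).symm.bijective) using 1
  funext q
  simp [Module.Basis.equivFun_symm_apply, Fin.sum_univ_two, Algebra.smul_def]

namespace Polynomial

variable {R : Type*} [CommRing R]

theorem monic_X_sq_sub_linear (a b : R) : (X ^ 2 - (C b * X + C a)).Monic :=
  monic_X_pow_sub (degree_linear_le.trans_lt (by decide))

theorem natDegree_X_sq_sub_linear [Nontrivial R] (a b : R) :
    (X ^ 2 - (C b * X + C a)).natDegree = 2 := by
  have hlin : (C b * X + C a).natDegree < (X ^ 2 : R[X]).natDegree := by
    rw [natDegree_X_pow]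
    exact natDegree_linear_le.trans_lt one_lt_two
  rw [natDegree_sub_eq_left_of_natDegree_lt hlin, natDegree_X_pow]

end Polynomial

instance inst_s5 : Fact (1 < 4) := ⟨by decide⟩

noncomputable def ofCoords (a b : Z4) (q : Z4 × Z4) : Rw a b :=
  algebraMap Z4 (Rw a b) q.1 + algebraMap Z4 (Rw a b) q.2 * ww a b

theorem ofCoords_bijective (a b : Z4) : Function.Bijective (ofCoords a b) :=
  (AdjoinRoot.powerBasis' (monic_X_sq_sub_linear a b)).bijective_algebraMap_add_algebraMap_mul_gen
    (natDegree_X_sq_sub_linear a b)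

theorem three_mul_ofCoords (a b : Z4) (q : Z4 × Z4) :
    3 * ofCoords a b q = ofCoords a b (3 * q.1, 3 * q.2) := by
  simp only [ofCoords, map_mul, map_ofNat]; ring

theorem ofCoords_add_two_add_two_mul_ww (a b : Z4) (q : Z4 × Z4) :
    ofCoords a b q + (2 + 2 * ww a b) = ofCoords a b (q.1 + 2, q.2 + 2) := by
  simp only [ofCoords, map_add, map_ofNat]; ring

theorem psi_bijective : Function.Bijective psi := by decide

theorem psi_three_mul (q : Z4 × Z4) : psi (3 * q.1, 3 * q.2) = ((psi q).2, (psi q).1) := by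
  revert q; decide

theorem psi_add_two (q : Z4 × Z4) : psi (q.1 + 2, q.2 + 2) = (3 - (psi q).1, 3 - (psi q).2) := by
  revert q; decide

/-- for every a, b ∈ ℤ/4ℤ the Gau map φ is a bijection from R_{a+bw} onto
Σ = Fin 4 × Fin 4, and it satisfies φ(3x) = (φ(x).2, φ(x).1) (reversal of the DNA pair)
and φ(x + (2+2w)) = (3 − φ(x).1, 3 − φ(x).2) (Watson–Crick complement of the DNA pair). -/
theorem gauMap_bijective_rev_compl (a b : Z4) (phi : Rw a b → Fin 4 × Fin 4)
    (hphi : IsGauMap a b phi) :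
    Function.Bijective phi ∧
    (∀ x : Rw a b, phi (3 * x) = ((phi x).2, (phi x).1)) ∧
    (∀ x : Rw a b, phi (x + (2 + 2 * ww a b)) = (3 - (phi x).1, 3 - (phi x).2)) := by
  have hpsi : ∀ q, phi (ofCoords a b q) = psi q := fun q => hphi q.1 q.2
  have hcoords := ofCoords_bijective a b
  refine ⟨(Function.Bijective.of_comp_iff phi hcoords).1 ?_, fun x => ?_, fun x => ?_⟩
  · simpa only [Function.comp_def, hpsi] using psi_bijective
  all_goals obtain ⟨q, rfl⟩ := hcoords.2 x
  · rw [three_mul_ofCoords, hpsi, hpsi, psi_three_mul]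
  · rw [ofCoords_add_two_add_two_mul_ww, hpsi, hpsi, psi_add_two]
end

section
/- Let n ≥ 1, let c ∈ Σⁿ, and let r be an integer with 0 ≤ r ≤ 2n. Then the number of vectors x ∈ Σⁿ with d_G(c, x) = r equals Σ_{i = max(0, r−n)}^{⌊r/2⌋} n!/(i!·(r−2i)!·(n−r+i)!) · 9^i · 6^{r−2i}. -/
/-!
The letter pair in one coordinate of `x` differs from that of `c` in 0, 1 or 2 components in
1, 6 and 9 ways, independently across coordinates, so the distance enumerator
`∑ x, X ^ d_G(c, x)` is `(1 + 6X + 9X²)ⁿ`. Its coefficient of `X ^ r` is read off by the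
trinomial theorem: `i` coordinates at distance 2 and `r - 2i` at distance 1.
-/

/-- The DNA pair alphabet Σ = Fin 4 × Fin 4 (A,G,C,T encoded as 0,1,2,3). -/
abbrev Sig := Fin 4 × Fin 4

/-- The Gau distance on Σⁿ:
d_G(x,y) = Σⱼ (δ(xⱼ.1, yⱼ.1) + δ(xⱼ.2, yⱼ.2)), where δ(u,v) = 0 if u = v, else 1. -/
def dG (n : ℕ) (x y : Fin n → Sig) : ℕ :=
  ∑ j, ((if (x j).1 = (y j).1 then 0 else 1) + (if (x j).2 = (y j).2 then 0 else 1))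

open Polynomial Finset
open scoped Nat

theorem card_filter_eq_coeff_sum_X_pow {α : Type*} (s : Finset α) (f : α → ℕ) (r : ℕ) :
    #{x ∈ s | f x = r} = (∑ x ∈ s, (X : ℕ[X]) ^ f x).coeff r := by
  simp only [finsetSum_coeff, coeff_X_pow, card_filter, eq_comm]

section GeneratingFunction

variable {R : Type*} [CommSemiring R]

theorem sum_X_pow_sum_eq_prod {ι α : Type*} [Fintype ι] [DecidableEq ι] [Fintype α]
    (f : ι → α → ℕ) :
    ∑ x : ι → α, (X : R[X]) ^ (∑ j, f j (x j)) = ∏ j, ∑ a, (X : R[X]) ^ f j a := by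
  simp only [Fintype.prod_sum, prod_pow_eq_pow_sum]

theorem sum_X_pow_ite_eq {α : Type*} [Fintype α] [DecidableEq α] (b : α) :
    ∑ u : α, (X : R[X]) ^ (if b = u then 0 else 1) =
      1 + ((Fintype.card α - 1 : ℕ) : R[X]) * X := by
  rw [← add_sum_erase _ _ (mem_univ b), if_pos rfl, pow_zero,
    sum_congr rfl fun u hu => by rw [if_neg (ne_of_mem_erase hu).symm, pow_one], sum_const,
    card_erase_of_mem (mem_univ b), card_univ, nsmul_eq_mul]

theorem sum_X_pow_ite_eq_add_ite_eq {α β : Type*} [Fintype α] [DecidableEq α] [Fintype β]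
    [DecidableEq β] (b : α × β) :
    ∑ a : α × β, (X : R[X]) ^ ((if b.1 = a.1 then 0 else 1) + (if b.2 = a.2 then 0 else 1)) =
      (1 + ((Fintype.card α - 1 : ℕ) : R[X]) * X) *
        (1 + ((Fintype.card β - 1 : ℕ) : R[X]) * X) := by
  rw [← sum_X_pow_ite_eq b.1, ← sum_X_pow_ite_eq b.2, Fintype.sum_mul_sum,
    Fintype.sum_prod_type]
  simp only [pow_add]

theorem coeff_one_add_C_mul_X_pow (a : R) (m k : ℕ) :
    ((1 + C a * X) ^ m).coeff k = m.choose k * a ^ k := by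
  have hterm (j : ℕ) : (C a * X) ^ j * 1 ^ (m - j) * (m.choose j : R[X]) =
      C (m.choose j * a ^ j) * X ^ j := by
    rw [one_pow, mul_one, mul_pow, ← C_pow, ← C_eq_natCast, C_mul]
    ring
  rw [add_comm, add_pow, finsetSum_coeff]
  simp only [hterm, coeff_C_mul_X_pow, sum_ite_eq, mem_range]
  split_ifs
  · rfl
  · rw [Nat.choose_eq_zero_of_lt (by omega), Nat.cast_zero, zero_mul]

theorem coeff_one_add_C_mul_X_add_C_mul_X_sq_pow (a b : R) (n r : ℕ) :
    ((1 + C a * X + C b * X ^ 2) ^ n).coeff r =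
      ∑ i ∈ Icc (r - n) (r / 2),
        (n.choose i * (n - i).choose (r - 2 * i) : ℕ) * b ^ i * a ^ (r - 2 * i) := by
  have hterm (i : ℕ) :
      ((C b * X ^ 2) ^ i * (1 + C a * X) ^ (n - i) * (n.choose i : R[X])).coeff r =
        n.choose i * b ^ i *
          if 2 * i ≤ r then ((1 + C a * X) ^ (n - i)).coeff (r - 2 * i) else 0 := by
    rw [← coeff_X_pow_mul', ← coeff_C_mul, mul_pow, ← C_pow, ← C_eq_natCast, ← pow_mul]
    congr 1
    rw [C_mul]
    ring
  rw [show 1 + C a * X + C b * X ^ 2 = C b * X ^ 2 + (1 + C a * X) by ring, add_pow,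
    finsetSum_coeff]
  simp only [hterm, coeff_one_add_C_mul_X_pow]
  -- outside `Icc (r - n) (r / 2)`, either `r < 2 * i` or `(n - i).choose (r - 2 * i) = 0`
  refine (sum_subset_zero_on_sdiff (fun i hi => ?_) (fun i hi => ?_) (fun i hi => ?_)).symm
  · simp only [mem_Icc, mem_range] at hi ⊢
    omega
  · simp only [mem_sdiff, mem_Icc, mem_range, not_and_or, not_le] at hi
    split_ifs with h
    · rw [Nat.choose_eq_zero_of_lt (n := n - i) (k := r - 2 * i) (by omega)]
      simp
    · rw [mul_zero]
  · rw [mem_Icc] at hi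
    rw [if_pos (by omega)]
    push_cast
    ring

end GeneratingFunction

theorem sum_X_pow_dG (n : ℕ) (c : Fin n → Sig) :
    ∑ x, (X : ℕ[X]) ^ dG n c x = (1 + C 6 * X + C 9 * X ^ 2) ^ n := by
  refine (sum_X_pow_sum_eq_prod fun j (a : Sig) =>
    (if (c j).1 = a.1 then 0 else 1) + (if (c j).2 = a.2 then 0 else 1)).trans ?_
  simp only [sum_X_pow_ite_eq_add_ite_eq, Fintype.card_fin, prod_const, card_univ]
  congr 1
  simp only [C_ofNat]
  ring

theorem Nat.factorial_div_factorial_mul_factorial_mul_factorial {n i j : ℕ} (h : i + j ≤ n) :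
    n ! / (i ! * j ! * (n - i - j)!) = n.choose i * (n - i).choose j := by
  refine Nat.div_eq_of_eq_mul_left (by positivity) ?_
  rw [← Nat.choose_mul_factorial_mul_factorial (n := n) (k := i) (by omega),
    ← Nat.choose_mul_factorial_mul_factorial (n := n - i) (k := j) (by omega)]
  ring

theorem gau_sphere_count_general (n : ℕ) (c : Fin n → Sig) (r : ℕ) :
    (Finset.univ.filter fun x : Fin n → Sig => dG n c x = r).card =
      ∑ i ∈ Finset.Icc (r - n) (r / 2),
        n.factorial / (i.factorial * (r - 2 * i).factorial * (n + i - r).factorial) *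
          9 ^ i * 6 ^ (r - 2 * i) := by
  rw [card_filter_eq_coeff_sum_X_pow, sum_X_pow_dG, coeff_one_add_C_mul_X_add_C_mul_X_sq_pow]
  refine sum_congr rfl fun i hi => ?_
  rw [mem_Icc] at hi
  rw [show n + i - r = n - i - (r - 2 * i) by omega,
    Nat.factorial_div_factorial_mul_factorial_mul_factorial (by omega), Nat.cast_id]

/-- the number of x ∈ Σⁿ at Gau distance exactly r from a fixed c ∈ Σⁿ is
Σ_{i = max(0, r−n)}^{⌊r/2⌋} n!/(i!·(r−2i)!·(n−r+i)!)·9^i·6^{r−2i}. -/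
theorem gau_sphere_count (n : ℕ) (hn : 1 ≤ n) (c : Fin n → Sig) (r : ℕ) (hr : r ≤ 2 * n) :
    (Finset.univ.filter fun x : Fin n → Sig => dG n c x = r).card =
      ∑ i ∈ Finset.Icc (r - n) (r / 2),
        n.factorial / (i.factorial * (r - 2 * i).factorial * (n + i - r).factorial) *
          9 ^ i * 6 ^ (r - 2 * i) :=
  gau_sphere_count_general n c r
end

section
/- Let n ≥ 1, let d be an integer with 1 ≤ d ≤ 2n+1, and set r := ⌊(d−1)/2⌋. If C ⊆ Σⁿ is a code with minimum Gau distance at least d, then the projection Σⁿ → Σ^{n−r} that deletes the first r coordinates is injective on C; in particular C and its image under this projection have the same cardinality. -/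
/-- if C ⊆ Σⁿ has minimum Gau distance ≥ d and r = ⌊(d−1)/2⌋, then the
projection Σⁿ → Σ^{n−r} deleting the first r coordinates is injective on C; in
particular C and its image under this projection have the same cardinality. -/
theorem gau_projection_injective (n d r : ℕ) (hn : 1 ≤ n) (hd1 : 1 ≤ d)
    (hd2 : d ≤ 2 * n + 1) (hr : r = (d - 1) / 2)
    (C : Finset (Fin n → Sig))
    (hC : ∀ x ∈ C, ∀ y ∈ C, x ≠ y → d ≤ dG n x y) :
    Set.InjOn
      (fun (x : Fin n → Sig) (j : Fin (n - r)) =>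
        x ⟨r + j.val, by have := j.isLt; omega⟩) (C : Set (Fin n → Sig)) ∧
    (C.image fun (x : Fin n → Sig) (j : Fin (n - r)) =>
        x ⟨r + j.val, by have := j.isLt; omega⟩).card = C.card := by
  have hinj : Set.InjOn
      (fun (x : Fin n → Sig) (j : Fin (n - r)) =>
        x ⟨r + j.val, by have := j.isLt; omega⟩) (C : Set (Fin n → Sig)) := by
    intro x hx y hy hxy
    by_contra hne
    have hd := hC x hx y hy hne
    -- x and y agree on coordinates ≥ r
    have hagree : ∀ j : Fin n, r ≤ j.val → x j = y j := by
      intro j hj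
      have hjr : j.val - r < n - r := by omega
      have h := congrFun hxy ⟨j.val - r, hjr⟩
      simp only at h
      have e : (⟨r + (j.val - r), by omega⟩ : Fin n) = j := by
        apply Fin.ext; simp; omega
      rwa [e] at h
    have hbound : dG n x y ≤ 2 * r := by
      unfold dG
      calc ∑ j, ((if (x j).1 = (y j).1 then 0 else 1) + (if (x j).2 = (y j).2 then 0 else 1))
          ≤ ∑ j : Fin n, (if j.val < r then 2 else 0) := by
            apply Finset.sum_le_sum
            intro j _
            by_cases h : j.val < r
            · simp only [h, if_true]
              split <;> split <;> omega
            · have := hagree j (by omega)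
              simp [this, h]
        _ = ∑ j ∈ Finset.univ.filter (fun j : Fin n => j.val < r), 2 := by
            rw [Finset.sum_filter]
        _ ≤ ∑ j ∈ Finset.univ.filter (fun j : Fin n => j.val < r), 2 := le_refl _
        _ = 2 * (Finset.univ.filter (fun j : Fin n => j.val < r)).card := by
            rw [Finset.sum_const]; ring
        _ ≤ 2 * r := by
            have : (Finset.univ.filter (fun j : Fin n => j.val < r)).card ≤ r := by
              calc (Finset.univ.filter (fun j : Fin n => j.val < r)).card
                  ≤ (Finset.range r).card := Finset.card_le_card_of_injOn Fin.val (by intro a ha; simp at ha ⊢; omega) (fun a _ b _ h => Fin.val_injective h)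
                _ = r := Finset.card_range r
            omega
    omega
  refine ⟨hinj, Finset.card_image_of_injOn hinj⟩
end

section
/- (Singleton-like Bound) Let n ≥ 1 and let d be an integer with 1 ≤ d ≤ 2n+1. If C ⊆ Σⁿ is a code with minimum Gau distance at least d, then |C| ≤ 16^{n − ⌊(d−1)/2⌋}. -/
/-- Singleton-like bound: if C ⊆ Σⁿ has minimum Gau distance ≥ d, then
|C| ≤ 16^{n − ⌊(d−1)/2⌋}. -/
theorem gau_singleton_bound (n d : ℕ) (hn : 1 ≤ n) (hd1 : 1 ≤ d) (hd2 : d ≤ 2 * n + 1)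
    (C : Finset (Fin n → Sig))
    (hC : ∀ x ∈ C, ∀ y ∈ C, x ≠ y → d ≤ dG n x y) :
    C.card ≤ 16 ^ (n - (d - 1) / 2) := by
  set k := (d - 1) / 2 with hk
  have hkn : k ≤ n := by omega
  -- restriction map to the first n - k coordinates
  have hm : ∀ j : Fin (n - k), (j : ℕ) < n := fun j => lt_of_lt_of_le j.2 (Nat.sub_le n k)
  set f : (Fin n → Sig) → (Fin (n - k) → Sig) :=
    fun x j => x ⟨j, hm j⟩ with hf
  have hinj : Set.InjOn f C := by
    intro x hx y hy hxy
    by_contra hne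
    have hd : d ≤ dG n x y := hC x hx y hy hne
    -- coordinates j with j.val < n - k agree
    have hagree : ∀ j : Fin n, (j : ℕ) < n - k → x j = y j := by
      intro j hj
      have := congrFun hxy ⟨j, hj⟩
      simpa [hf] using this
    -- bound dG by 2 * k
    have hbound : dG n x y ≤ 2 * k := by
      have hsum : dG n x y =
          ∑ j ∈ Finset.univ.filter (fun j : Fin n => ¬ (j : ℕ) < n - k),
            ((if (x j).1 = (y j).1 then 0 else 1) + (if (x j).2 = (y j).2 then 0 else 1)) := by
        rw [dG]
        rw [← Finset.sum_filter_add_sum_filter_not Finset.univ (fun j : Fin n => (j : ℕ) < n - k)]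
        have h0 : ∑ j ∈ Finset.univ.filter (fun j : Fin n => (j : ℕ) < n - k),
            ((if (x j).1 = (y j).1 then 0 else 1) + (if (x j).2 = (y j).2 then 0 else 1)) = 0 := by
          apply Finset.sum_eq_zero
          intro j hj
          simp only [Finset.mem_filter] at hj
          rw [hagree j hj.2]
          simp
        omega
      rw [hsum]
      calc ∑ j ∈ Finset.univ.filter (fun j : Fin n => ¬ (j : ℕ) < n - k),
            ((if (x j).1 = (y j).1 then 0 else 1) + (if (x j).2 = (y j).2 then 0 else 1))
          ≤ ∑ _j ∈ Finset.univ.filter (fun j : Fin n => ¬ (j : ℕ) < n - k), 2 := by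
            apply Finset.sum_le_sum
            intro j _
            split_ifs <;> omega
        _ = 2 * (Finset.univ.filter (fun j : Fin n => ¬ (j : ℕ) < n - k)).card := by
            rw [Finset.sum_const]; ring
        _ ≤ 2 * k := by
            apply Nat.mul_le_mul_left
            rcases Nat.eq_zero_or_pos k with h0 | hpos
            · convert Nat.zero_le _
              rw [Finset.card_eq_zero, Finset.filter_eq_empty_iff]
              intro j _
              simp only [not_not]
              omega
            · have ha : n - k < n := by omega
              have : Finset.univ.filter (fun j : Fin n => ¬ (j : ℕ) < n - k)
                  = Finset.Ici (⟨n - k, ha⟩ : Fin n) := by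
                ext j
                simp [Fin.le_def]
              rw [this, Fin.card_Ici]
              simp only [Fin.val_mk]
              omega
    have h2k : 2 * k ≤ d - 1 := by omega
    omega
  have hcard : C.card ≤ Fintype.card (Fin (n - k) → Sig) := by
    have := Finset.card_le_card_of_injOn f (fun x _ => Finset.mem_univ (f x)) hinj
    simpa using this
  calc C.card ≤ Fintype.card (Fin (n - k) → Sig) := hcard
    _ = 16 ^ (n - k) := by simp [Sig]
end

section
/- (Plotkin-like Bound) Let n ≥ 1 and let d be a positive integer with 2d > 3n. If C ⊆ Σⁿ is a code with minimum Gau distance at least d, then |C| ≤ ⌊2d/(2d − 3n)⌋. -/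
lemma four_sq_ineq (a b c e : ℕ) : (a + b + c + e)^2 ≤ 4 * (a^2 + b^2 + c^2 + e^2) := by
  have : ((a:ℤ) + b + c + e)^2 ≤ 4 * ((a:ℤ)^2 + b^2 + c^2 + e^2) := by
    nlinarith [sq_nonneg ((a:ℤ) - b), sq_nonneg ((a:ℤ) - c), sq_nonneg ((a:ℤ) - e),
      sq_nonneg ((b:ℤ) - c), sq_nonneg ((b:ℤ) - e), sq_nonneg ((c:ℤ) - e)]
  exact_mod_cast this

lemma key_lemma {α : Type*} [DecidableEq α] (C : Finset α) (g : α → Fin 4) :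
    4 * (∑ x ∈ C, ∑ y ∈ C, (if g x = g y then (0:ℕ) else 1)) ≤ 3 * C.card ^ 2 := by
  classical
  set a : α → Fin 4 → ℕ := fun x v => if g x = v then 1 else 0 with ha
  have point : ∀ x y : α, (if g x = g y then (1:ℕ) else 0) = ∑ v : Fin 4, a x v * a y v := by
    intro x y
    simp only [ha]
    generalize g x = p
    generalize g y = q
    fin_cases p <;> fin_cases q <;> decide
  have heq : (∑ x ∈ C, ∑ y ∈ C, (if g x = g y then (1:ℕ) else 0))
      = ∑ v : Fin 4, (∑ x ∈ C, a x v) ^ 2 := by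
    calc ∑ x ∈ C, ∑ y ∈ C, (if g x = g y then (1:ℕ) else 0)
        = ∑ x ∈ C, ∑ y ∈ C, ∑ v : Fin 4, a x v * a y v :=
          Finset.sum_congr rfl fun x _ => Finset.sum_congr rfl fun y _ => point x y
      _ = ∑ x ∈ C, ∑ v : Fin 4, ∑ y ∈ C, a x v * a y v :=
          Finset.sum_congr rfl fun x _ => Finset.sum_comm
      _ = ∑ v : Fin 4, ∑ x ∈ C, ∑ y ∈ C, a x v * a y v := Finset.sum_comm
      _ = ∑ v : Fin 4, (∑ x ∈ C, a x v) * (∑ y ∈ C, a y v) := by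
          refine Finset.sum_congr rfl fun v _ => ?_
          rw [Finset.sum_mul_sum]
      _ = ∑ v : Fin 4, (∑ x ∈ C, a x v) ^ 2 := by simp [sq]
  have hMsum : (∑ v : Fin 4, ∑ x ∈ C, a x v) = C.card := by
    rw [Finset.sum_comm]
    have : ∀ x : α, (∑ v : Fin 4, a x v) = 1 := by
      intro x
      simp only [ha]
      generalize g x = p
      fin_cases p <;> decide
    simp [this]
  have hlb : C.card ^ 2 ≤ 4 * (∑ x ∈ C, ∑ y ∈ C, (if g x = g y then (1:ℕ) else 0)) := by
    rw [heq, ← hMsum, Fin.sum_univ_four, Fin.sum_univ_four]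
    exact four_sq_ineq _ _ _ _
  have hsplit : (∑ x ∈ C, ∑ y ∈ C, (if g x = g y then (1:ℕ) else 0))
      + (∑ x ∈ C, ∑ y ∈ C, (if g x = g y then (0:ℕ) else 1)) = C.card ^ 2 := by
    rw [← Finset.sum_add_distrib]
    have : ∀ x ∈ C, ((∑ y ∈ C, (if g x = g y then (1:ℕ) else 0))
        + ∑ y ∈ C, (if g x = g y then (0:ℕ) else 1)) = C.card := by
      intro x _
      rw [← Finset.sum_add_distrib]
      have : ∀ y ∈ C, ((if g x = g y then (1:ℕ) else 0) + (if g x = g y then (0:ℕ) else 1)) = 1 := by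
        intro y _; by_cases h : g x = g y <;> simp [h]
      rw [Finset.sum_congr rfl this, Finset.sum_const, smul_eq_mul, mul_one]
    rw [Finset.sum_congr rfl this, Finset.sum_const, smul_eq_mul, sq]
  omega

lemma swap3 {β γ : Type*} [Fintype γ] (s t : Finset β) (f : β → β → γ → ℕ) :
    ∑ x ∈ s, ∑ y ∈ t, ∑ j : γ, f x y j = ∑ j : γ, ∑ x ∈ s, ∑ y ∈ t, f x y j :=
  calc ∑ x ∈ s, ∑ y ∈ t, ∑ j : γ, f x y j
      = ∑ x ∈ s, ∑ j : γ, ∑ y ∈ t, f x y j :=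
        Finset.sum_congr rfl fun x _ => Finset.sum_comm
    _ = ∑ j : γ, ∑ x ∈ s, ∑ y ∈ t, f x y j := Finset.sum_comm

/-- Plotkin-like bound: if 2d > 3n and C ⊆ Σⁿ has minimum Gau distance
≥ d, then |C| ≤ ⌊2d/(2d − 3n)⌋. -/
theorem gau_plotkin_bound (n d : ℕ) (hn : 1 ≤ n) (hd1 : 1 ≤ d) (h : 3 * n < 2 * d)
    (C : Finset (Fin n → Sig))
    (hC : ∀ x ∈ C, ∀ y ∈ C, x ≠ y → d ≤ dG n x y) :
    C.card ≤ 2 * d / (2 * d - 3 * n) := by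
  classical
  obtain ⟨M, hMdef⟩ : ∃ M, C.card = M := ⟨C.card, rfl⟩
  rw [hMdef]
  rcases Nat.eq_zero_or_pos M with hM0 | hMpos
  · rw [hM0]; exact Nat.zero_le _
  obtain ⟨S, hS⟩ : ∃ S, S = ∑ x ∈ C, ∑ y ∈ C, dG n x y := ⟨_, rfl⟩
  -- upper bound
  have hSrw : S = ∑ j : Fin n,
      ((∑ x ∈ C, ∑ y ∈ C, (if (x j).1 = (y j).1 then (0:ℕ) else 1))
        + (∑ x ∈ C, ∑ y ∈ C, (if (x j).2 = (y j).2 then (0:ℕ) else 1))) := by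
    rw [hS]
    simp only [dG, Finset.sum_add_distrib]
    congr 1
    · exact swap3 C C fun x y j => if (x j).1 = (y j).1 then 0 else 1
    · exact swap3 C C fun x y j => if (x j).2 = (y j).2 then 0 else 1
  have hup : 4 * S ≤ 6 * n * M ^ 2 := by
    rw [hSrw, Finset.mul_sum]
    calc ∑ j : Fin n, 4 * ((∑ x ∈ C, ∑ y ∈ C, (if (x j).1 = (y j).1 then (0:ℕ) else 1))
            + (∑ x ∈ C, ∑ y ∈ C, (if (x j).2 = (y j).2 then (0:ℕ) else 1)))
        ≤ ∑ j : Fin n, (3 * M ^ 2 + 3 * M ^ 2) := by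
          refine Finset.sum_le_sum fun j _ => ?_
          rw [Nat.mul_add]
          exact Nat.add_le_add (hMdef ▸ key_lemma C (fun z => (z j).1))
            (hMdef ▸ key_lemma C (fun z => (z j).2))
      _ = 6 * n * M ^ 2 := by rw [Finset.sum_const]; simp [Finset.card_univ]; ring
  -- lower bound
  have hlow : M * ((M - 1) * d) ≤ S := by
    rw [hS]
    calc M * ((M - 1) * d) = ∑ _x ∈ C, (M - 1) * d := by
          rw [Finset.sum_const, smul_eq_mul, hMdef]
      _ ≤ ∑ x ∈ C, ∑ y ∈ C, dG n x y := by
          refine Finset.sum_le_sum fun x hx => ?_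
          calc (M - 1) * d = ∑ _y ∈ C.erase x, d := by
                rw [Finset.sum_const, smul_eq_mul, Finset.card_erase_of_mem hx, hMdef]
            _ ≤ ∑ y ∈ C.erase x, dG n x y := Finset.sum_le_sum fun y hy =>
                hC x hx y (Finset.mem_of_mem_erase hy) (Ne.symm (Finset.ne_of_mem_erase hy))
            _ ≤ ∑ y ∈ C, dG n x y := Finset.sum_le_sum_of_subset (Finset.erase_subset x C)
  -- combine
  obtain ⟨m, hm⟩ : ∃ m, M = m + 1 := ⟨M - 1, (Nat.succ_pred_eq_of_pos hMpos).symm⟩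
  have hmain : 4 * ((m + 1) * (m * d)) ≤ 6 * n * (m + 1) ^ 2 := by
    calc 4 * ((m + 1) * (m * d)) = 4 * (M * ((M - 1) * d)) := by rw [hm]; simp
      _ ≤ 4 * S := Nat.mul_le_mul_left 4 hlow
      _ ≤ 6 * n * M ^ 2 := hup
      _ = 6 * n * (m + 1) ^ 2 := by rw [hm]
  have h2 : 4 * (m * d) ≤ 6 * n * (m + 1) := by
    have := hmain
    have h3 : (m + 1) * (4 * (m * d)) ≤ (m + 1) * (6 * n * (m + 1)) := by ring_nf; ring_nf at this; linarith
    exact Nat.le_of_mul_le_mul_left h3 (Nat.succ_pos m)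
  obtain ⟨e, hepos, he⟩ : ∃ e, 0 < e ∧ 2 * d = 3 * n + e := ⟨2 * d - 3 * n, Nat.sub_pos_of_lt h, (Nat.add_sub_cancel' h.le).symm⟩
  rw [Nat.le_div_iff_mul_le (Nat.sub_pos_of_lt h), hm,
    Nat.sub_eq_of_eq_add (he.trans (Nat.add_comm _ _)), he]
  -- goal: (m+1) * e ≤ 3*n + e
  have h4 : 2 * (m * e) ≤ 6 * n := by nlinarith [h2, he]
  nlinarith [h4]
end
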